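/- The optimal value of the mixed-integer structured pruning problem (with binary constraint s ∈ {0,1}^n) equals the optimal value of its continuous relaxation (with s ∈ [0,1]^n), under the common constraints W·diag(s) = 0 and 1ᵀs = λ, with objective (1/2)‖WX − Y‖_F², provided both problems attain their minima. -/

import Mathlib

open Matrix Finset

/-! A relaxed feasible point `(W, s)` has at least `λ` nonzero entries of `s`, since they lie
in `[0, 1]` and sum to `λ`. The indicator of any `λ` of them is binary, sums to `λ`, and still
annihilates `W`, because it vanishes wherever `s` does. So both problems have the same set of
feasible matrices `W`, and an objective depending on `W` alone has the same minimum over both. -/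

theorem Matrix.mul_diagonal_eq_zero_of_support_subset {l n R : Type*} [Fintype n] [DecidableEq n]
    [Semiring R] [NoZeroDivisors R] {W : Matrix l n R} {s t : n → R}
    (hs : W * diagonal s = 0) (hts : ∀ i, s i = 0 → t i = 0) : W * diagonal t = 0 := by
  ext j k
  have hjk : W j k * s k = 0 := by simpa using congr_fun (congr_fun hs j) k
  rcases mul_eq_zero.mp hjk with hW | hs
  · simp [hW]
  · simp [hts k hs]

theorem Finset.sum_le_card_filter_ne_zero {ι : Type*} [Fintype ι] {s : ι → ℝ}
    (hs : ∀ i, s i ≤ 1) : ∑ i, s i ≤ #{i | s i ≠ 0} := by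
  rw [← sum_filter_ne_zero]
  simpa using sum_le_card_nsmul _ _ 1 fun i _ => hs i

theorem exists_binary_of_mem_Icc_of_sum_eq {ι : Type*} [Fintype ι] {s : ι → ℝ} {lam : ℕ}
    (hs : ∀ i, 0 ≤ s i ∧ s i ≤ 1) (hsum : ∑ i, s i = lam) :
    ∃ t : ι → ℝ, (∀ i, s i = 0 → t i = 0) ∧ (∀ i, t i = 0 ∨ t i = 1) ∧ ∑ i, t i = lam := by
  classical
  have hcard : lam ≤ #{i | s i ≠ 0} := by
    exact_mod_cast hsum ▸ sum_le_card_filter_ne_zero fun i => (hs i).2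
  obtain ⟨S, hS, hScard⟩ := exists_subset_card_eq hcard
  refine ⟨fun i => if i ∈ S then 1 else 0, fun i hi => ?_, fun i => ?_, ?_⟩
  · have : i ∉ S := fun hiS => (mem_filter.mp (hS hiS)).2 hi
    simp [this]
  · by_cases hi : i ∈ S <;> simp [hi]
  · simp [hScard]

theorem stmt2_general {m n : ℕ} (lam : ℕ) (f : Matrix (Fin m) (Fin n) ℝ → ℝ)
    (FeasInt FeasRel : Matrix (Fin m) (Fin n) ℝ → (Fin n → ℝ) → Prop)
    (hFeasInt : FeasInt = fun W s =>
      W * Matrix.diagonal s = (0 : Matrix (Fin m) (Fin n) ℝ) ∧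
        (∀ i, s i = 0 ∨ s i = 1) ∧ ∑ i, s i = (lam : ℝ))
    (hFeasRel : FeasRel = fun W s =>
      W * Matrix.diagonal s = (0 : Matrix (Fin m) (Fin n) ℝ) ∧
        (∀ i, 0 ≤ s i ∧ s i ≤ 1) ∧ ∑ i, s i = (lam : ℝ))
    (W₀ : Matrix (Fin m) (Fin n) ℝ) (s₀ : Fin n → ℝ)
    (h₀ : FeasInt W₀ s₀ ∧ ∀ W s, FeasInt W s → f W₀ ≤ f W)
    (W₁ : Matrix (Fin m) (Fin n) ℝ) (s₁ : Fin n → ℝ)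
    (h₁ : FeasRel W₁ s₁ ∧ ∀ W s, FeasRel W s → f W₁ ≤ f W) :
    f W₀ = f W₁ := by
  subst hFeasInt hFeasRel
  obtain ⟨⟨hW₀, hs₀, hsum₀⟩, hmin₀⟩ := h₀
  obtain ⟨⟨hW₁, hs₁, hsum₁⟩, hmin₁⟩ := h₁
  apply le_antisymm
  · obtain ⟨t, hts, ht, hsum⟩ := exists_binary_of_mem_Icc_of_sum_eq hs₁ hsum₁
    exact hmin₀ W₁ t ⟨mul_diagonal_eq_zero_of_support_subset hW₁ hts, ht, hsum⟩
  · refine hmin₁ W₀ s₀ ⟨hW₀, fun i => ?_, hsum₀⟩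
    rcases hs₀ i with h | h <;> simp [h]

/-- The mixed-integer structured pruning problem and its continuous relaxation
have the same optimal value, provided both attain their minima. -/
theorem stmt2 {m n p : ℕ} (X : Matrix (Fin n) (Fin p) ℝ) (Y : Matrix (Fin m) (Fin p) ℝ)
    (lam : ℕ) (hlam : 1 ≤ lam) (hlamn : lam ≤ n)
    (f : Matrix (Fin m) (Fin n) ℝ → ℝ)
    (hf : f = fun W => (1 / 2) * ∑ j, ∑ k, ((W * X - Y) j k) ^ 2)
    (FeasInt FeasRel : Matrix (Fin m) (Fin n) ℝ → (Fin n → ℝ) → Prop)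
    (hFeasInt : FeasInt = fun W s =>
      W * Matrix.diagonal s = (0 : Matrix (Fin m) (Fin n) ℝ) ∧
        (∀ i, s i = 0 ∨ s i = 1) ∧ ∑ i, s i = (lam : ℝ))
    (hFeasRel : FeasRel = fun W s =>
      W * Matrix.diagonal s = (0 : Matrix (Fin m) (Fin n) ℝ) ∧
        (∀ i, 0 ≤ s i ∧ s i ≤ 1) ∧ ∑ i, s i = (lam : ℝ))
    (W₀ : Matrix (Fin m) (Fin n) ℝ) (s₀ : Fin n → ℝ)
    (h₀ : FeasInt W₀ s₀ ∧ ∀ W s, FeasInt W s → f W₀ ≤ f W)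
    (W₁ : Matrix (Fin m) (Fin n) ℝ) (s₁ : Fin n → ℝ)
    (h₁ : FeasRel W₁ s₁ ∧ ∀ W s, FeasRel W s → f W₁ ≤ f W) :
    f W₀ = f W₁ :=
  stmt2_general lam f FeasInt FeasRel hFeasInt hFeasRel W₀ s₀ h₀ W₁ s₁ h₁
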